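/- arXiv:math/0202107 — 4 statements merged into one kernel-verified Lean document; each statement's English description precedes it below -/
import Mathlib

section
/- Lebourg mean value theorem: if Φ : X → ℝ is locally Lipschitz and x ≠ y in X, then there exist τ ∈ (0,1) and ξ ∈ ∂Φ(x + τ(y−x)) such that Φ(y) − Φ(x) = ⟨ξ, y−x⟩. -/
/-!
By Rolle, `g t = Φ (x + t • (y - x)) - t * (Φ y - Φ x)` has a local extremum at some
`τ ∈ (0, 1)`. Comparing `g` at `τ ± t`, a minimum or a maximum alike, bounds difference quotients
of `Φ` near `z = x + τ • (y - x)` from below and gives `c ≤ Φ°(z; v)` and `-c ≤ Φ°(z; -v)` for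
`v = y - x`, `c = Φ y - Φ x`. The Clarke derivative `Φ°(z; ·)` is sublinear and bounded by
`K ‖·‖`, so Hahn–Banach extends `t • v ↦ t * c` to a continuous functional below it.
-/

open Filter Topology Set

/-- Clarke generalized directional derivative of `Φ` at `x` in direction `v`. -/
noncomputable def clarkeDeriv {X : Type*} [NormedAddCommGroup X] [NormedSpace ℝ X]
    (Φ : X → ℝ) (x v : X) : ℝ :=
  limsup (fun p : X × ℝ => (Φ (p.1 + p.2 • v) - Φ p.1) / p.2) ((𝓝 x) ×ˢ (𝓝[>] (0:ℝ)))

/-- Clarke subdifferential of `Φ` at `x`. -/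
def clarkeSubdiff {X : Type*} [NormedAddCommGroup X] [NormedSpace ℝ X]
    (Φ : X → ℝ) (x : X) : Set (X →L[ℝ] ℝ) :=
  {f | ∀ v, f v ≤ clarkeDeriv Φ x v}

open scoped NNReal

lemma exists_linearMap_le_sublinear_apply_eq {E : Type*} [AddCommGroup E] [Module ℝ E]
    {N : E → ℝ} (N_hom : ∀ c : ℝ, 0 < c → ∀ x, N (c • x) = c * N x)
    (N_add : ∀ x y, N (x + y) ≤ N x + N y) {v : E} (hv : v ≠ 0) {c : ℝ}
    (h₁ : c ≤ N v) (h₂ : -c ≤ N (-v)) :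
    ∃ g : E →ₗ[ℝ] ℝ, (∀ x, g x ≤ N x) ∧ g v = c := by
  have N_zero : N 0 = 0 := by grind [N_hom 2 (by norm_num) 0, smul_zero]
  let f : E →ₗ.[ℝ] ℝ := LinearPMap.mkSpanSingleton v c hv
  have hfN : ∀ p : f.domain, f p ≤ N p := by
    rintro ⟨w, hw⟩
    obtain ⟨t, rfl⟩ := Submodule.mem_span_singleton.1 hw
    rw [LinearPMap.mkSpanSingleton'_apply, smul_eq_mul]
    rcases lt_trichotomy t 0 with ht | rfl | ht
    · calc t * c = -t * -c := by ring
        _ ≤ -t * N (-v) := mul_le_mul_of_nonneg_left h₂ (neg_nonneg.2 ht.le)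
        _ = N (t • v) := by rw [← N_hom _ (neg_pos.2 ht), neg_smul_neg]
    · simp [N_zero]
    · calc t * c ≤ t * N v := mul_le_mul_of_nonneg_left h₁ ht.le
        _ = N (t • v) := (N_hom t ht v).symm
  obtain ⟨g, hgf, hgN⟩ := exists_extension_of_le_sublinear f N N_hom N_add hfN
  refine ⟨g, hgN, ?_⟩
  rw [hgf ⟨v, Submodule.mem_span_singleton_self v⟩, LinearPMap.mkSpanSingleton_apply]

section ClarkeDeriv

variable {X : Type*} [NormedAddCommGroup X] [NormedSpace ℝ X]

noncomputable def clarkeQuotient (Φ : X → ℝ) (v : X) (p : X × ℝ) : ℝ :=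
  (Φ (p.1 + p.2 • v) - Φ p.1) / p.2

lemma clarkeDeriv_eq_limsup (Φ : X → ℝ) (z v : X) :
    clarkeDeriv Φ z v = limsup (clarkeQuotient Φ v) (𝓝 z ×ˢ 𝓝[>] 0) :=
  rfl

lemma tendsto_add_smul_nhds_prod_nhdsGT (z v : X) :
    Tendsto (fun p : X × ℝ => p.1 + p.2 • v) (𝓝 z ×ˢ 𝓝[>] 0) (𝓝 z) := by
  have h : Tendsto (fun p : X × ℝ => p.1 + p.2 • v) (𝓝 (z, 0)) (𝓝 (z + (0 : ℝ) • v)) :=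
    (continuous_fst.add (continuous_snd.smul continuous_const)).tendsto _
  rw [zero_smul, add_zero, nhds_prod_eq] at h
  exact h.mono_left (prod_mono le_rfl nhdsWithin_le_nhds)

variable {Φ : X → ℝ} {z : X} {s : Set X} {K : ℝ≥0}

lemma eventually_abs_clarkeQuotient_le (hs : s ∈ 𝓝 z) (hK : LipschitzOnWith K Φ s) (v : X) :
    ∀ᶠ p in 𝓝 z ×ˢ 𝓝[>] 0, |clarkeQuotient Φ v p| ≤ K * ‖v‖ := by
  filter_upwards [tendsto_fst.eventually_mem hs,
    (tendsto_add_smul_nhds_prod_nhdsGT z v).eventually_mem hs,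
    tendsto_snd.eventually_mem self_mem_nhdsWithin] with p hp₁ hp₂ (ht : 0 < p.2)
  have hd := hK.dist_le_mul _ hp₂ _ hp₁
  rw [Real.dist_eq, dist_self_add_left, norm_smul, Real.norm_of_nonneg ht.le] at hd
  rw [clarkeQuotient, abs_div, abs_of_pos ht, div_le_iff₀ ht]
  linarith

lemma isBoundedUnder_le_clarkeQuotient (hs : s ∈ 𝓝 z) (hK : LipschitzOnWith K Φ s) (v : X) :
    IsBoundedUnder (· ≤ ·) (𝓝 z ×ˢ 𝓝[>] 0) (clarkeQuotient Φ v) :=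
  isBoundedUnder_of_eventually_le <|
    (eventually_abs_clarkeQuotient_le hs hK v).mono fun _ h => (abs_le.1 h).2

lemma isCoboundedUnder_le_clarkeQuotient (hs : s ∈ 𝓝 z) (hK : LipschitzOnWith K Φ s) (v : X) :
    IsCoboundedUnder (· ≤ ·) (𝓝 z ×ˢ 𝓝[>] 0) (clarkeQuotient Φ v) :=
  isCoboundedUnder_le_of_eventually_le _ <|
    (eventually_abs_clarkeQuotient_le hs hK v).mono fun _ h => (abs_le.1 h).1

lemma clarkeDeriv_le_mul_norm (hs : s ∈ 𝓝 z) (hK : LipschitzOnWith K Φ s) (v : X) :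
    clarkeDeriv Φ z v ≤ K * ‖v‖ :=
  limsup_le_of_le (isCoboundedUnder_le_clarkeQuotient hs hK v) <|
    (eventually_abs_clarkeQuotient_le hs hK v).mono fun _ h => (abs_le.1 h).2

lemma eventually_clarkeQuotient_lt (hs : s ∈ 𝓝 z) (hK : LipschitzOnWith K Φ s) {v : X} {r : ℝ}
    (hr : clarkeDeriv Φ z v < r) : ∀ᶠ p in 𝓝 z ×ˢ 𝓝[>] 0, clarkeQuotient Φ v p < r :=
  eventually_lt_of_limsup_lt hr (isBoundedUnder_le_clarkeQuotient hs hK v)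

lemma le_clarkeDeriv_of_tendsto (hs : s ∈ 𝓝 z) (hK : LipschitzOnWith K Φ s) {v : X} {c : ℝ}
    {u : ℝ → X} (hu : Tendsto u (𝓝[>] 0) (𝓝 z))
    (h : ∀ᶠ t in 𝓝[>] 0, c ≤ (Φ (u t + t • v) - Φ (u t)) / t) :
    c ≤ clarkeDeriv Φ z v :=
  le_limsup_of_frequently_le ((hu.prodMk tendsto_id).frequently h.frequently)
    (isBoundedUnder_le_clarkeQuotient hs hK v)

lemma clarkeDeriv_add_le (hs : s ∈ 𝓝 z) (hK : LipschitzOnWith K Φ s) (v w : X) :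
    clarkeDeriv Φ z (v + w) ≤ clarkeDeriv Φ z v + clarkeDeriv Φ z w := by
  refine le_of_forall_pos_le_add fun δ hδ => ?_
  have hlt_v := ((tendsto_add_smul_nhds_prod_nhdsGT z w).prodMk tendsto_snd).eventually
    (eventually_clarkeQuotient_lt hs hK (lt_add_of_pos_right (clarkeDeriv Φ z v) (half_pos hδ)))
  have hlt_w := eventually_clarkeQuotient_lt hs hK
    (lt_add_of_pos_right (clarkeDeriv Φ z w) (half_pos hδ))
  rw [clarkeDeriv_eq_limsup Φ z (v + w)]
  refine limsup_le_of_le (isCoboundedUnder_le_clarkeQuotient hs hK _) ?_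
  filter_upwards [hlt_v, hlt_w] with p hpv hpw
  have hsplit : clarkeQuotient Φ (v + w) p =
      clarkeQuotient Φ v (p.1 + p.2 • w, p.2) + clarkeQuotient Φ w p := by
    simp only [clarkeQuotient, ← add_div, smul_add, add_comm (p.2 • v), ← add_assoc,
      sub_add_sub_cancel]
  linarith

lemma clarkeDeriv_smul_le (hs : s ∈ 𝓝 z) (hK : LipschitzOnWith K Φ s) (v : X) {a : ℝ}
    (ha : 0 < a) : clarkeDeriv Φ z (a • v) ≤ a * clarkeDeriv Φ z v := by
  refine le_of_forall_gt_imp_ge_of_dense fun r hr => ?_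
  have hscale : Tendsto (a * ·) (𝓝[>] (0 : ℝ)) (𝓝[>] 0) :=
    tendsto_comap.mono_left (comap_mulLeft_nhdsGT_zero ha).ge
  have hlt := (tendsto_fst.prodMk (hscale.comp tendsto_snd)).eventually
    (eventually_clarkeQuotient_lt hs hK (show clarkeDeriv Φ z v < r / a by
      rwa [lt_div_iff₀ ha, mul_comm]))
  rw [clarkeDeriv_eq_limsup Φ z (a • v)]
  refine limsup_le_of_le (isCoboundedUnder_le_clarkeQuotient hs hK _) ?_
  filter_upwards [hlt, tendsto_snd.eventually_mem self_mem_nhdsWithin] with p hp (ht : 0 < p.2)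
  have hrescale : clarkeQuotient Φ (a • v) p = a * clarkeQuotient Φ v (p.1, a * p.2) := by
    simp only [clarkeQuotient, smul_smul, mul_comm p.2 a]
    field_simp
  rw [hrescale]
  exact (lt_div_iff₀' ha).1 hp |>.le

lemma clarkeDeriv_smul (hs : s ∈ 𝓝 z) (hK : LipschitzOnWith K Φ s) (v : X) {a : ℝ}
    (ha : 0 < a) : clarkeDeriv Φ z (a • v) = a * clarkeDeriv Φ z v := by
  refine le_antisymm (clarkeDeriv_smul_le hs hK v ha) ?_
  have h := clarkeDeriv_smul_le hs hK (a • v) (inv_pos.2 ha)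
  rw [inv_smul_smul₀ ha.ne'] at h
  rwa [← le_inv_mul_iff₀ ha]

lemma exists_mem_clarkeSubdiff_apply_eq (hs : s ∈ 𝓝 z) (hK : LipschitzOnWith K Φ s) {v : X}
    (hv : v ≠ 0) {c : ℝ} (h₁ : c ≤ clarkeDeriv Φ z v) (h₂ : -c ≤ clarkeDeriv Φ z (-v)) :
    ∃ ξ ∈ clarkeSubdiff Φ z, ξ v = c := by
  obtain ⟨g, hgN, hgv⟩ := exists_linearMap_le_sublinear_apply_eq
    (fun _ ha w => clarkeDeriv_smul hs hK w ha) (clarkeDeriv_add_le hs hK) hv h₁ h₂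
  have hbound : ∀ w, ‖g w‖ ≤ K * ‖w‖ := fun w => by
    have hneg := (hgN (-w)).trans (clarkeDeriv_le_mul_norm hs hK (-w))
    rw [map_neg, norm_neg] at hneg
    exact abs_le.2 ⟨by linarith, (hgN w).trans (clarkeDeriv_le_mul_norm hs hK w)⟩
  exact ⟨g.mkContinuous K hbound, hgN, hgv⟩

lemma le_clarkeDeriv_of_isLocalMin (hs : s ∈ 𝓝 z) (hK : LipschitzOnWith K Φ s) {v : X} {c : ℝ}
    (h : IsLocalMin (fun t : ℝ => Φ (z + t • v) - t * c) 0) : c ≤ clarkeDeriv Φ z v := by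
  refine le_clarkeDeriv_of_tendsto hs hK tendsto_const_nhds ?_
  filter_upwards [nhdsWithin_le_nhds h, self_mem_nhdsWithin] with t (ht : _ ≤ _) (htpos : 0 < t)
  rw [zero_smul, add_zero, zero_mul, sub_zero] at ht
  rw [le_div_iff₀ htpos]
  linarith

lemma le_clarkeDeriv_of_isLocalMax (hs : s ∈ 𝓝 z) (hK : LipschitzOnWith K Φ s) {v : X} {c : ℝ}
    (h : IsLocalMax (fun t : ℝ => Φ (z + t • v) - t * c) 0) : c ≤ clarkeDeriv Φ z v := by
  have hu : Tendsto (fun t : ℝ => z + (-t) • v) (𝓝[>] 0) (𝓝 z) := by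
    have : Continuous fun t : ℝ => z + (-t) • v := by fun_prop
    simpa using (this.tendsto 0).mono_left nhdsWithin_le_nhds
  have hneg := (continuous_neg.tendsto' (0 : ℝ) 0 neg_zero).eventually h
  refine le_clarkeDeriv_of_tendsto hs hK hu ?_
  filter_upwards [nhdsWithin_le_nhds hneg, self_mem_nhdsWithin] with t (ht : _ ≤ _) (htpos : 0 < t)
  rw [zero_smul, add_zero, zero_mul, sub_zero, neg_smul] at ht
  rw [neg_smul, neg_add_cancel_right, le_div_iff₀ htpos]
  linarith

lemma le_clarkeDeriv_of_isLocalExtr (hs : s ∈ 𝓝 z) (hK : LipschitzOnWith K Φ s) {v : X} {c : ℝ}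
    (h : IsLocalExtr (fun t : ℝ => Φ (z + t • v) - t * c) 0) : c ≤ clarkeDeriv Φ z v :=
  h.elim (le_clarkeDeriv_of_isLocalMin hs hK) (le_clarkeDeriv_of_isLocalMax hs hK)

lemma neg_le_clarkeDeriv_neg_of_isLocalExtr (hs : s ∈ 𝓝 z) (hK : LipschitzOnWith K Φ s) {v : X}
    {c : ℝ} (h : IsLocalExtr (fun t : ℝ => Φ (z + t • v) - t * c) 0) :
    -c ≤ clarkeDeriv Φ z (-v) := by
  have hneg := (neg_zero (G := ℝ) ▸ h).comp_continuous continuous_neg.continuousAt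
  refine le_clarkeDeriv_of_isLocalExtr hs hK (hneg.congr (Eventually.of_forall fun t => ?_))
  simp only [Function.comp_apply, neg_smul, smul_neg, neg_mul, mul_neg]

end ClarkeDeriv

theorem lebourg_mean_value {X : Type*} [NormedAddCommGroup X] [NormedSpace ℝ X]
    (Φ : X → ℝ) (hΦ : LocallyLipschitz Φ) (x y : X) (hxy : x ≠ y) :
    ∃ τ ∈ Set.Ioo (0:ℝ) 1, ∃ ξ ∈ clarkeSubdiff Φ (x + τ • (y - x)),
      Φ y - Φ x = ξ (y - x) := by
  set v := y - x
  set c := Φ y - Φ x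
  set g : ℝ → ℝ := fun t => Φ (x + t • v) - t * c
  have hg : g 0 = g 1 := by simp [g, v, c]
  have hgc : Continuous g := by have := hΦ.continuous; fun_prop
  obtain ⟨τ, hτ, hextr⟩ := exists_isLocalExtr_Ioo zero_lt_one hgc.continuousOn hg
  set z := x + τ • v
  have hshift : IsLocalExtr (fun t : ℝ => Φ (z + t • v) - t * c) 0 := by
    have h := ((add_zero τ).symm ▸ hextr).comp_continuous (continuous_const_add τ).continuousAt
    refine (h.comp_mono (monotone_id.add_const (τ * c))).congr (Eventually.of_forall fun t => ?_)
    simp only [g, z, Function.comp_apply, id, add_smul, add_assoc]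
    ring
  obtain ⟨K, s, hs, hK⟩ := hΦ z
  obtain ⟨ξ, hξ, hξv⟩ := exists_mem_clarkeSubdiff_apply_eq hs hK (sub_ne_zero.2 hxy.symm)
    (le_clarkeDeriv_of_isLocalExtr hs hK hshift)
    (neg_le_clarkeDeriv_neg_of_isLocalExtr hs hK hshift)
  exact ⟨τ, hτ, ξ, hξ, hξv.symm⟩
end

section
/- Main nonsmooth minimax theorem: Let E = V ⊕ W be a Banach space and Φ : E → ℝ locally Lipschitz. Assume (a) for every w ∈ W the set V(w) = {v ∈ V : Φ(v+w) = max_{g∈V} Φ(g+w)} is nonempty, (b) the function φ(w) = max_{g∈V} Φ(g+w) is bounded below on W and attains its minimum at some w̄ ∈ W, and (c) there is a continuous map s : W → V with s(w) ∈ V(w) for all w ∈ W. Then ū = s(w̄) + w̄ satisfies 0 ∈ ∂Φ(ū) and Φ(ū) = min_{w∈W} max_{v∈V} Φ(v+w). -/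
open Filter Topology Set

theorem nonsmooth_minimax {E : Type*} [NormedAddCommGroup E] [NormedSpace ℝ E]
    [CompleteSpace E] (V W : Submodule ℝ E) (hVW : IsCompl V W)
    (Φ : E → ℝ) (hΦ : LocallyLipschitz Φ)
    -- (a) and (c): a continuous selection of maximizers
    (s : E → E) (hs_cont : ContinuousOn s (W : Set E))
    (hs_mem : ∀ w ∈ W, s w ∈ V)
    (hs_max : ∀ w ∈ W, ∀ g ∈ V, Φ (g + w) ≤ Φ (s w + w))
    -- (b): φ = max is bounded below and attains its minimum at w̄
    (wbar : E) (hwbar : wbar ∈ W)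
    (hmin : ∀ w ∈ W, Φ (s wbar + wbar) ≤ Φ (s w + w)) :
    (0 : E →L[ℝ] ℝ) ∈ clarkeSubdiff Φ (s wbar + wbar) ∧
    IsLeast ((fun w => Φ (s w + w)) '' (W : Set E)) (Φ (s wbar + wbar)) ∧
    IsGreatest ((fun v => Φ (v + wbar)) '' (V : Set E)) (Φ (s wbar + wbar)) := by
  refine ⟨?_, ⟨⟨wbar, hwbar, rfl⟩, ?_⟩, ⟨⟨s wbar, hs_mem wbar hwbar, rfl⟩, ?_⟩⟩
  · -- 0 ∈ ∂Φ(ū)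
    intro v
    simp only [ContinuousLinearMap.zero_apply]
    -- decompose v = v₁ + v₂
    have hv : v ∈ V ⊔ W := by rw [hVW.sup_eq_top]; trivial
    obtain ⟨v₁, hv₁, v₂, hv₂, hv12⟩ := Submodule.mem_sup.mp hv
    set q : E × ℝ → ℝ := fun p => (Φ (p.1 + p.2 • v) - Φ p.1) / p.2 with hq
    set w : ℝ → E := fun t => wbar + t • v₂ with hw
    set p : ℝ → E := fun t => s (w t) - t • v₁ + wbar with hp
    have hwW : ∀ t, w t ∈ W := fun t => W.add_mem hwbar (W.smul_mem _ hv₂)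
    -- p t + t • v = s (w t) + w t
    have hkey : ∀ t : ℝ, p t + t • v = s (w t) + w t := by
      intro t
      simp only [hp, hw, ← hv12, smul_add]
      abel
    -- the difference quotient is nonneg for t > 0
    have hqpos : ∀ t ∈ Ioi (0:ℝ), 0 ≤ q (p t, t) := by
      intro t ht
      apply div_nonneg _ (le_of_lt ht)
      rw [sub_nonneg, hkey]
      calc Φ (p t) = Φ ((s (w t) - t • v₁) + wbar) := rfl
        _ ≤ Φ (s wbar + wbar) :=
            hs_max wbar hwbar _ (V.sub_mem (hs_mem _ (hwW t)) (V.smul_mem _ hv₁))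
        _ ≤ Φ (s (w t) + w t) := hmin _ (hwW t)
    -- p t → ū as t → 0⁺
    have hwt : Tendsto w (𝓝[>] (0:ℝ)) (𝓝[(W : Set E)] wbar) := by
      rw [tendsto_nhdsWithin_iff]
      constructor
      · apply tendsto_nhdsWithin_of_tendsto_nhds
        have : Tendsto (fun t : ℝ => wbar + t • v₂) (𝓝 0) (𝓝 (wbar + (0:ℝ) • v₂)) := by
          exact (tendsto_const_nhds.add ((continuous_id.smul continuous_const).tendsto 0))
        simpa using this
      · exact Eventually.of_forall fun t => hwW t
    have hpt : Tendsto p (𝓝[>] (0:ℝ)) (𝓝 (s wbar + wbar)) := by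
      have h1 : Tendsto (fun t => s (w t)) (𝓝[>] (0:ℝ)) (𝓝 (s wbar)) :=
        (hs_cont wbar hwbar).tendsto.comp hwt
      have h2 : Tendsto (fun t : ℝ => t • v₁) (𝓝[>] (0:ℝ)) (𝓝 0) := by
        apply tendsto_nhdsWithin_of_tendsto_nhds
        have : Tendsto (fun t : ℝ => t • v₁) (𝓝 0) (𝓝 ((0:ℝ) • v₁)) :=
          (continuous_id.smul continuous_const).tendsto 0
        simpa using this
      have := (h1.sub h2).add (tendsto_const_nhds (x := wbar))
      simpa using this
    -- push forward along t ↦ (p t, t)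
    have hG : Tendsto (fun t : ℝ => (p t, t)) (𝓝[>] (0:ℝ))
        ((𝓝 (s wbar + wbar)) ×ˢ (𝓝[>] (0:ℝ))) :=
      hpt.prodMk tendsto_id
    -- conclude limsup ≥ 0
    rw [clarkeDeriv, Filter.limsup_eq]
    by_cases hS : {a : ℝ | ∀ᶠ x in (𝓝 (s wbar + wbar)) ×ˢ (𝓝[>] (0:ℝ)), q x ≤ a}.Nonempty
    · refine le_csInf hS ?_
      intro b hb
      have hb' : ∀ᶠ t in 𝓝[>] (0:ℝ), q (p t, t) ≤ b := hG.eventually hb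
      have h0 : ∀ᶠ t in 𝓝[>] (0:ℝ), 0 ≤ q (p t, t) :=
        eventually_mem_nhdsWithin.mono hqpos
      obtain ⟨t, h1, h2⟩ := (hb'.and h0).exists
      linarith
    · rw [Set.not_nonempty_iff_eq_empty.mp hS, Real.sInf_empty]
  · rintro x ⟨w, hwW, rfl⟩
    exact hmin w hwW
  · rintro x ⟨g, hgV, rfl⟩
    exact hs_max wbar hwbar g hgV
end

section
/- Continuity of the maximizing selection (finite-dimensional case): Let E = V ⊕ W with dim V < ∞, Φ : E → ℝ continuous, bounded below on W (i.e. inf_{w∈W} Φ(w) > −∞), with Φ(v+w) → −∞ as ‖v‖ → ∞ uniformly for w in bounded subsets of W, and such that for each w ∈ W the function v ↦ Φ(v+w) has a unique maximizer s(w) ∈ V. Then s : W → V is continuous. -/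
open Filter Topology Set

theorem selection_continuous_finiteDim {E : Type*} [NormedAddCommGroup E]
    [NormedSpace ℝ E] (V W : Submodule ℝ E) (hVW : IsCompl V W)
    [FiniteDimensional ℝ V] (Φ : E → ℝ) (hΦ : Continuous Φ)
    (hbdd : ∃ m : ℝ, ∀ w ∈ W, m ≤ Φ w)
    (hcoer : ∀ B : Set E, B ⊆ (W : Set E) → Bornology.IsBounded B →
      ∀ M : ℝ, ∃ R : ℝ, ∀ v ∈ V, ∀ w ∈ B, R ≤ ‖v‖ → Φ (v + w) ≤ -M)
    (s : E → E) (hs_mem : ∀ w ∈ W, s w ∈ V)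
    (hs_max : ∀ w ∈ W, ∀ v ∈ V, Φ (v + w) ≤ Φ (s w + w))
    (hs_uniq : ∀ w ∈ W, ∀ v ∈ V, (∀ v' ∈ V, Φ (v' + w) ≤ Φ (v + w)) → v = s w) :
    ContinuousOn s (W : Set E) := by
  obtain ⟨m, hm⟩ := hbdd
  -- the value at the maximizer is at least m
  have hval : ∀ w ∈ W, m ≤ Φ (s w + w) := by
    intro w hw
    have h0 := hs_max w hw 0 (zero_mem V)
    rw [zero_add] at h0
    exact le_trans (hm w hw) h0
  intro w₀ hw₀
  rw [ContinuousWithinAt]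
  apply tendsto_of_subseq_tendsto
  intro ns hns
  -- ns : ℕ → E tends to w₀ within W
  have hnsE : Tendsto ns atTop (𝓝 w₀) := hns.mono_right nhdsWithin_le_nhds
  have hnsW : ∀ᶠ n in atTop, ns n ∈ (W : Set E) :=
    hns self_mem_nhdsWithin
  -- bounded set B
  set B : Set E := (insert w₀ (Set.range ns)) ∩ (W : Set E) with hB
  have hBW : B ⊆ (W : Set E) := inter_subset_right
  have hBbdd : Bornology.IsBounded B := by
    apply Bornology.IsBounded.subset _ inter_subset_left
    exact (hnsE.cauchySeq.isBounded_range).insert w₀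
  obtain ⟨R, hR⟩ := hcoer B hBW hBbdd (1 - m)
  -- uniform bound on the maximizers over B
  have hsb : ∀ w ∈ B, ‖s w‖ < R := by
    intro w hw
    by_contra hcon
    push_neg at hcon
    have h1 := hR (s w) (hs_mem w (hBW hw)) w hw hcon
    have h2 := hval w (hBW hw)
    linarith
  -- sequence in V
  have key : ∃ ms : ℕ → ℕ, Tendsto (fun n => s (ns (ms n))) atTop (𝓝 (s w₀)) := by
    classical
    set y : ℕ → V := fun n =>
      if h : ns n ∈ W then ⟨s (ns n), hs_mem _ h⟩ else 0 with hy
    have hyball : ∀ᶠ n in atTop, y n ∈ Metric.closedBall (0 : V) R := by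
      filter_upwards [hnsW] with n hn
      have hBn : ns n ∈ B := ⟨Or.inr ⟨n, rfl⟩, hn⟩
      have hyn : y n = ⟨s (ns n), hs_mem _ hn⟩ := dif_pos hn
      rw [Metric.mem_closedBall, dist_zero_right, hyn]
      exact le_of_lt (hsb (ns n) hBn)
    obtain ⟨a, _, φ, hφmono, hφtend⟩ :=
      tendsto_subseq_of_frequently_bounded (Metric.isBounded_closedBall)
        hyball.frequently
    -- limit of the coercions
    have hcoe : Tendsto (fun k => ((y (φ k)) : E)) atTop (𝓝 (a : E)) :=
      ((continuous_subtype_val.tendsto a).comp hφtend)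
    have hnsφ : Tendsto (fun k => ns (φ k)) atTop (𝓝 w₀) :=
      hnsE.comp hφmono.tendsto_atTop
    have hWφ : ∀ᶠ k in atTop, ns (φ k) ∈ (W : Set E) :=
      hφmono.tendsto_atTop.eventually hnsW
    have hsy : ∀ᶠ k in atTop, s (ns (φ k)) = ((y (φ k)) : E) := by
      filter_upwards [hWφ] with k hk
      have hyk : y (φ k) = ⟨s (ns (φ k)), hs_mem _ hk⟩ := dif_pos hk
      rw [hyk]
    have hstend : Tendsto (fun k => s (ns (φ k))) atTop (𝓝 (a : E)) :=
      hcoe.congr' (hsy.mono fun k hk => hk.symm)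
    -- identify the limit as s w₀
    have hmax : ∀ v' ∈ V, Φ (v' + w₀) ≤ Φ ((a : E) + w₀) := by
      intro v' hv'
      have hineq : ∀ᶠ k in atTop,
          Φ (v' + ns (φ k)) ≤ Φ (s (ns (φ k)) + ns (φ k)) := by
        filter_upwards [hWφ] with k hk
        exact hs_max _ hk v' hv'
      have hL : Tendsto (fun k => Φ (v' + ns (φ k))) atTop (𝓝 (Φ (v' + w₀))) :=
        (hΦ.tendsto _).comp (tendsto_const_nhds.add hnsφ)
      have hRt : Tendsto (fun k => Φ (s (ns (φ k)) + ns (φ k))) atTop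
          (𝓝 (Φ ((a : E) + w₀))) :=
        (hΦ.tendsto _).comp (hstend.add hnsφ)
      exact le_of_tendsto_of_tendsto hL hRt hineq
    have ha : (a : E) = s w₀ := hs_uniq w₀ hw₀ (a : E) a.2 hmax
    exact ⟨φ, ha ▸ hstend⟩
  exact key
end

section
/- Minimal selection theorem: Let M be a metric space, N a Hilbert space, and T : M → 2^N a continuous (both lower and upper semi-continuous) multivalued map with T(m) nonempty, closed and convex for each m ∈ M. Then the map m ↦ 𝔪(T(m)), where 𝔪(T(m)) is the unique element of minimal norm in T(m), is a continuous selection of T. -/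
open Filter Topology Set

/-! The minimal-norm point `s m` of `T m` exists by the Hilbert projection theorem. Upper
semicontinuity of `T` makes `m ↦ ‖s m‖` lower semicontinuous. Lower semicontinuity of `T` gives,
for `m` near `m₀`, a point `y ∈ T m` close to `s m₀`, so `‖y‖` exceeds `‖s m‖` only slightly.
Since the midpoint of `s m` and `y` lies in `T m`, the parallelogram law gives
`‖s m - y‖² ≤ 2 (‖y‖² - ‖s m‖²)`, so `s m` is close to `y`, hence to `s m₀`. -/

section Hilbert

variable {N : Type*} [NormedAddCommGroup N] [InnerProductSpace ℝ N] {K : Set N} {v y : N}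

theorem exists_isMinOn_norm_of_isComplete_of_convex (hne : K.Nonempty) (hK : IsComplete K)
    (hconv : Convex ℝ K) : ∃ v ∈ K, IsMinOn (‖·‖) K v := by
  obtain ⟨v, hv, hvinf⟩ := exists_norm_eq_iInf_of_complete_convex hne hK hconv 0
  refine ⟨v, hv, fun y hy => ?_⟩
  have : ‖0 - v‖ ≤ ‖0 - y‖ :=
    hvinf ▸ ciInf_le ⟨0, forall_mem_range.2 fun _ => norm_nonneg _⟩ (⟨y, hy⟩ : K)
  simpa using this

theorem sq_norm_sub_le_of_isMinOn_norm (hconv : Convex ℝ K) (hv : v ∈ K)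
    (hmin : IsMinOn (‖·‖) K v) (hy : y ∈ K) : ‖v - y‖ ^ 2 ≤ 2 * (‖y‖ ^ 2 - ‖v‖ ^ 2) := by
  have hmid : ‖v‖ ≤ ‖v + y‖ / 2 := by
    have : ‖v‖ ≤ ‖midpoint ℝ v y‖ := hmin (hconv.midpoint_mem hv hy)
    rwa [midpoint_eq_smul_add, norm_smul, invOf_eq_inv, Real.norm_of_nonneg (by norm_num),
      inv_mul_eq_div] at this
  have hpar := parallelogram_law_with_norm ℝ v y
  nlinarith [norm_nonneg v]

end Hilbert

section Selection

variable {M : Type*} [TopologicalSpace M] {N : Type*} [NormedAddCommGroup N]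
  {T : M → Set N} {s : M → N}

theorem lowerSemicontinuous_norm_of_isMinOn
    (husc : ∀ A : Set N, IsClosed A → IsClosed {m : M | (T m ∩ A).Nonempty})
    (hs : ∀ m, s m ∈ T m) (hmin : ∀ m, IsMinOn (‖·‖) (T m) (s m)) :
    LowerSemicontinuous fun m => ‖s m‖ := by
  intro m₀ r hr
  have hm₀ : m₀ ∉ {m | (T m ∩ Metric.closedBall 0 r).Nonempty} := fun ⟨z, hz, hzr⟩ =>
    (hr.trans_le (hmin m₀ hz)).not_ge (mem_closedBall_zero_iff.1 hzr)
  filter_upwards [(husc _ Metric.isClosed_closedBall).isOpen_compl.mem_nhds hm₀] with m hm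
  exact lt_of_not_ge fun h => hm ⟨s m, hs m, mem_closedBall_zero_iff.2 h⟩

variable [InnerProductSpace ℝ N]

theorem continuous_of_isMinOn_norm
    (hlsc : ∀ U : Set N, IsOpen U → IsOpen {m : M | (T m ∩ U).Nonempty})
    (husc : ∀ A : Set N, IsClosed A → IsClosed {m : M | (T m ∩ A).Nonempty})
    (hconv : ∀ m, Convex ℝ (T m)) (hs : ∀ m, s m ∈ T m)
    (hmin : ∀ m, IsMinOn (‖·‖) (T m) (s m)) : Continuous s := by
  refine continuous_iff_continuousAt.2 fun m₀ => Metric.tendsto_nhds.2 fun ε hε => ?_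
  set d := ‖s m₀‖
  have hsmall : ∀ᶠ η in 𝓝[>] (0 : ℝ), 8 * η * (d + η) < (ε / 2) ^ 2 ∧ η < ε / 2 := by
    refine nhdsWithin_le_nhds (Eventually.and ?_ (eventually_lt_nhds (half_pos hε)))
    exact (by fun_prop : Continuous fun η : ℝ => 8 * η * (d + η)).continuousAt.eventually_lt
      continuousAt_const (by simp; positivity)
  obtain ⟨η, ⟨hηd, hηε⟩, hη⟩ := (hsmall.and self_mem_nhdsWithin).exists
  have hnear : ∀ᶠ m in 𝓝 m₀, (T m ∩ Metric.ball (s m₀) η).Nonempty :=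
    (hlsc _ Metric.isOpen_ball).mem_nhds ⟨s m₀, hs m₀, Metric.mem_ball_self hη⟩
  have hfar : ∀ᶠ m in 𝓝 m₀, d - η < ‖s m‖ :=
    lowerSemicontinuous_norm_of_isMinOn husc hs hmin m₀ _ (sub_lt_self d hη)
  filter_upwards [hnear, hfar] with m ⟨y, hy, hyη⟩ hsm
  rw [Metric.mem_ball] at hyη
  have hyd : ‖y‖ < d + η := by
    have := norm_sub_norm_le y (s m₀)
    rw [← dist_eq_norm] at this
    linarith
  have hsy : dist (s m) y < ε / 2 := by
    have hsq := sq_norm_sub_le_of_isMinOn_norm (hconv m) (hs m) (hmin m) hy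
    have hle : ‖s m‖ ≤ ‖y‖ := hmin m hy
    rw [dist_eq_norm]
    refine lt_of_pow_lt_pow_left₀ 2 (by positivity) ?_
    nlinarith [norm_nonneg (s m)]
  calc dist (s m) (s m₀) ≤ dist (s m) y + dist y (s m₀) := dist_triangle _ _ _
    _ < ε / 2 + ε / 2 := by gcongr; linarith
    _ = ε := add_halves ε

end Selection

theorem minimal_selection_continuous {M : Type*} [MetricSpace M]
    {N : Type*} [NormedAddCommGroup N] [InnerProductSpace ℝ N] [CompleteSpace N]
    (T : M → Set N)
    (hlsc : ∀ U : Set N, IsOpen U → IsOpen {m : M | (T m ∩ U).Nonempty})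
    (husc : ∀ A : Set N, IsClosed A → IsClosed {m : M | (T m ∩ A).Nonempty})
    (hne : ∀ m, (T m).Nonempty) (hcl : ∀ m, IsClosed (T m))
    (hconv : ∀ m, Convex ℝ (T m)) :
    ∃ s : M → N, Continuous s ∧ ∀ m : M, s m ∈ T m ∧ ∀ y ∈ T m, ‖s m‖ ≤ ‖y‖ := by
  choose s hs hmin using fun m =>
    exists_isMinOn_norm_of_isComplete_of_convex (hne m) (hcl m).isComplete (hconv m)
  exact ⟨s, continuous_of_isMinOn_norm hlsc husc hconv hs hmin, fun m => ⟨hs m, hmin m⟩⟩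
end
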